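/- Let c be a nonnegative Borel cost function, C>0, and let P_{Y|X} be a Markov kernel on ℝ satisfying E[c(Y−x) | X=x] ≤ C for every x∈ℝ. Fix k>0 and define the averaged kernel P̄_{Y|X} by P̄_{Y|X=x}(B) := (1/(2k)) ∫_{−k}^{k} P_{Y|X=x+z}(B+z) dz. Then P̄_{Y|X} is a Markov kernel on ℝ and satisfies the same cost constraint: E_{P̄}[c(Y−x) | X=x] ≤ C for every x∈ℝ. -/

import Mathlib

open MeasureTheory Filter Real Set
open scoped ENNReal NNReal Classical

noncomputable section

/-- Shift operator on Borel measures: `(shiftMeasure a μ) B = μ (B - a)`. -/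
def shiftMeasure (a : ℝ) (μ : Measure ℝ) : Measure ℝ := μ.map (· + a)

/-- Kullback–Leibler divergence between Borel measures on `ℝ`. -/
def KLdiv (μ ν : Measure ℝ) : ℝ≥0∞ :=
  if μ ≪ ν ∧ Integrable (llr μ ν) μ then ENNReal.ofReal (∫ x, llr μ ν x ∂μ) else ⊤

/-- Standing assumptions on the cost function. -/
structure IsCostFun (c : ℝ → ℝ) (α β : ℝ) : Prop where
  nonneg : ∀ x, 0 ≤ c x
  zero : c 0 = 0
  even : ∀ x, c (-x) = c x
  mono : ∀ x y : ℝ, |x| ≤ |y| → c x ≤ c y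
  continuous : Continuous c
  tail : Tendsto (fun x : ℝ => c x / (β * x ^ α)) atTop (nhds 1)


/-- The averaged kernel `P̄_{Y|X=x}(B) = (1/(2k)) ∫_{-k}^{k} P_{Y|X=x+z}(B+z) dz`. -/
def avgKernel (k : ℝ) (κ : ℝ → Measure ℝ) (x : ℝ) : Measure ℝ :=
  Measure.bind ((ENNReal.ofReal (2 * k))⁻¹ • volume.restrict (Set.Icc (-k) k))
    fun z => (κ (x + z)).map fun y => y - z

/-! Writing `P̄_{Y|X=x}` as the mixture over `z ∼ Unif[-k, k]` of the laws of `Y - z` with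
`Y ∼ P_{Y|X=x+z}`, the cost of each component at `x` is the cost of `P_{Y|X=x+z}` at `x + z`, hence
at most `C`, and mixing preserves this bound. The mixture is the composition of the Markov kernel
`(x, z) ↦ law(Y - z)` with `x ↦ δ_x ⊗ Unif[-k, k]`, so it is a Markov kernel. -/
namespace ProbabilityTheory.Kernel

variable {G : Type*} [AddGroup G] [MeasurableSpace G] [MeasurableAdd₂ G]

/-- `(x, z) ↦ law of Y - z` where `Y ∼ κ (x + z)`. -/
def shiftedKernel (κ : Kernel G G) : Kernel (G × G) G :=
  (κ.comap (fun p => p.1 + p.2) (by fun_prop) ×ₖ deterministic Prod.snd measurable_snd).map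
    fun q => q.1 - q.2

instance [MeasurableSub₂ G] (κ : Kernel G G) [IsMarkovKernel κ] :
    IsMarkovKernel (shiftedKernel κ) := by
  unfold shiftedKernel; exact IsMarkovKernel.map _ (by fun_prop)

lemma shiftedKernel_apply [MeasurableSub₂ G] (κ : Kernel G G) [IsSFiniteKernel κ] (x z : G) :
    shiftedKernel κ (x, z) = (κ (x + z)).map (· - z) := by
  rw [shiftedKernel, map_apply _ (by fun_prop), prod_apply, comap_apply, deterministic_apply,
    Measure.prod_dirac, Measure.map_map (by fun_prop) (by fun_prop)]
  rfl

def shiftAverage (ν : Measure G) [SFinite ν] (κ : Kernel G G) : Kernel G G :=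
  shiftedKernel κ ∘ₖ (Kernel.id ×ₖ const G ν)

instance [MeasurableSub₂ G] (ν : Measure G) [IsProbabilityMeasure ν] (κ : Kernel G G)
    [IsMarkovKernel κ] :
    IsMarkovKernel (shiftAverage ν κ) := by
  unfold shiftAverage; infer_instance

lemma shiftAverage_apply (ν : Measure G) [SFinite ν] (κ : Kernel G G) [IsSFiniteKernel κ]
    (x : G) : shiftAverage ν κ x = ν.bind fun z => shiftedKernel κ (x, z) := by
  ext B hB
  rw [shiftAverage, comp_apply, prod_apply, id_apply, const_apply, Measure.dirac_prod,
    Measure.bind_apply hB (by fun_prop), Measure.bind_apply hB (by fun_prop),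
    MeasureTheory.lintegral_map (Kernel.measurable_coe _ hB) (by fun_prop)]

lemma lintegral_shiftAverage_le [MeasurableSub₂ G] (ν : Measure G) [IsProbabilityMeasure ν]
    (κ : Kernel G G) [IsSFiniteKernel κ] {f : G → ℝ≥0∞} (hf : Measurable f) {C : ℝ≥0∞}
    (hκ : ∀ x, ∫⁻ y, f (y - x) ∂κ x ≤ C) (x : G) :
    ∫⁻ y, f (y - x) ∂shiftAverage ν κ x ≤ C := by
  rw [shiftAverage_apply, Measure.lintegral_bind (by fun_prop) (by fun_prop)]
  calc ∫⁻ z, ∫⁻ y, f (y - x) ∂shiftedKernel κ (x, z) ∂ν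
      ≤ ∫⁻ _, C ∂ν := lintegral_mono fun z => ?_
    _ = C := by simp
  rw [shiftedKernel_apply, MeasureTheory.lintegral_map (by fun_prop) (by fun_prop)]
  simpa only [sub_add_eq_sub_sub_swap] using hκ (x + z)

end ProbabilityTheory.Kernel

open ProbabilityTheory

lemma avgKernel_eq_shiftAverage (k : ℝ) (κ : Kernel ℝ ℝ) [IsSFiniteKernel κ] :
    avgKernel k κ = Kernel.shiftAverage (volume[|Icc (-k) k]) κ := by
  ext1 x
  simp only [Kernel.shiftAverage_apply, Kernel.shiftedKernel_apply, avgKernel,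
    ProbabilityTheory.cond, Real.volume_Icc, sub_neg_eq_add, two_mul]

theorem averaged_kernel_markov_and_cost_general (c : ℝ → ℝ) (hcm : Measurable c)
    (C : ℝ) (κ : ℝ → Measure ℝ)
    (hκp : ∀ x, IsProbabilityMeasure (κ x))
    (hκm : ∀ B : Set ℝ, MeasurableSet B → Measurable fun x => κ x B)
    (hcost : ∀ x : ℝ, (∫⁻ y, ENNReal.ofReal (c (y - x)) ∂(κ x)) ≤ ENNReal.ofReal C)
    (k : ℝ) (hk : 0 < k) :
    (∀ x, IsProbabilityMeasure (avgKernel k κ x)) ∧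
    (∀ B : Set ℝ, MeasurableSet B → Measurable fun x => avgKernel k κ x B) ∧
    (∀ x : ℝ, (∫⁻ y, ENNReal.ofReal (c (y - x)) ∂(avgKernel k κ x)) ≤ ENNReal.ofReal C) := by
  let κK : Kernel ℝ ℝ := ⟨κ, Measure.measurable_of_measurable_coe _ hκm⟩
  have : IsMarkovKernel κK := ⟨hκp⟩
  have : IsProbabilityMeasure (volume[|Icc (-k) k]) :=
    cond_isProbabilityMeasure_of_finite (by simp [hk]) measure_Icc_lt_top.ne
  have hκK : avgKernel k κ = Kernel.shiftAverage (volume[|Icc (-k) k]) κK :=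
    avgKernel_eq_shiftAverage k κK
  rw [hκK]
  exact ⟨fun x => inferInstance, fun B hB => Kernel.measurable_coe _ hB,
    Kernel.lintegral_shiftAverage_le _ κK (f := fun y => ENNReal.ofReal (c y)) (by fun_prop) hcost⟩

/-- The averaged kernel is again a Markov kernel and satisfies the same cost constraint. -/
theorem averaged_kernel_markov_and_cost (c : ℝ → ℝ) (hc0 : ∀ x, 0 ≤ c x) (hcm : Measurable c)
    (C : ℝ) (hC : 0 < C) (κ : ℝ → Measure ℝ)
    (hκp : ∀ x, IsProbabilityMeasure (κ x))
    (hκm : ∀ B : Set ℝ, MeasurableSet B → Measurable fun x => κ x B)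
    (hcost : ∀ x : ℝ, (∫⁻ y, ENNReal.ofReal (c (y - x)) ∂(κ x)) ≤ ENNReal.ofReal C)
    (k : ℝ) (hk : 0 < k) :
    (∀ x, IsProbabilityMeasure (avgKernel k κ x)) ∧
    (∀ B : Set ℝ, MeasurableSet B → Measurable fun x => avgKernel k κ x B) ∧
    (∀ x : ℝ, (∫⁻ y, ENNReal.ofReal (c (y - x)) ∂(avgKernel k κ x)) ≤ ENNReal.ofReal C) :=
  averaged_kernel_markov_and_cost_general c hcm C κ hκp hκm hcost k hk

end
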